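/- Fix an integer n ≥ 4. Let λ : Fin n → ℝ, set t = (∑ i, λ i) / (n − 1), and let h : Fin n → Fin n → Fin n → ℝ be totally symmetric: h i j k = h j i k = h i k j for all i, j, k. Assume the semiparallelity equations: for all a, b, c, d, e in Fin n, (λ a + λ b − t) * (h c d b * δ a e − h c d a * δ b e − δ d b * h c a e + δ d a * h c b e − δ c b * h d a e + δ c a * h d b e) = 0, where δ i j = 1 if i = j and δ i j = 0 otherwise. If there exists i in Fin n with h i i i ≠ 0, then λ i = 0 and λ j = λ k for all j, k in Fin n with j ≠ i and k ≠ i. -/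

import Mathlib

/-!
If `h i i i ≠ 0`, the semiparallelity equations with indices `(i, j, i, i, j)` and `(i, j, j, j, j)`
read `(λ i + λ j - t) (2 h i j j - h i i i) = 0` and `(λ i + λ j - t) h i j j = 0`, so
`λ i + λ j = t` for every `j ≠ i`. Summing over `j ≠ i` and comparing with `∑ λ = (n - 1) t`
gives `(n - 2) λ i = 0`.
-/

/-- Kronecker delta on `Fin n`, valued in `ℝ`. -/
def kdelta {n : ℕ} (i j : Fin n) : ℝ := if i = j then 1 else 0

@[simp]
theorem kdelta_self {n : ℕ} (i : Fin n) : kdelta i i = 1 := if_pos rfl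

theorem kdelta_of_ne {n : ℕ} {i j : Fin n} (hij : i ≠ j) : kdelta i j = 0 := if_neg hij

theorem add_eq_of_semiparallel {n : ℕ} {lam : Fin n → ℝ} {t : ℝ} {h : Fin n → Fin n → Fin n → ℝ}
    (hsym : ∀ i j k : Fin n, h i j k = h j i k ∧ h i j k = h i k j)
    (hsp : ∀ a b c d e : Fin n,
      (lam a + lam b - t) *
        (h c d b * kdelta a e - h c d a * kdelta b e
          - kdelta d b * h c a e + kdelta d a * h c b e
          - kdelta c b * h d a e + kdelta c a * h d b e) = 0)
    {i j : Fin n} (hji : j ≠ i) (hiii : h i i i ≠ 0) :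
    lam i + lam j = t := by
  have hjji : h j j i = h i j j := by rw [(hsym j j i).2, (hsym j i j).1]
  have hjij : h j i j = h i j j := (hsym j i j).1
  have hmixed := hsp i j i i j
  have hpure := hsp i j j j j
  simp only [kdelta_self, kdelta_of_ne hji, kdelta_of_ne hji.symm, hjji, hjij] at hmixed hpure
  by_contra hne
  have hs : lam i + lam j - t ≠ 0 := sub_ne_zero.mpr hne
  have hmixed' := (mul_eq_zero.mp hmixed).resolve_left hs
  have hpure' := (mul_eq_zero.mp hpure).resolve_left hs
  exact hiii (by linarith)

theorem sum_eq_of_forall_ne_eq {n : ℕ} (f : Fin n → ℝ) (i : Fin n) (c : ℝ)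
    (hf : ∀ j, j ≠ i → f j = c) :
    ∑ k, f k = f i + ((n : ℝ) - 1) * c := by
  rw [← Finset.add_sum_erase _ _ (Finset.mem_univ i),
    Finset.sum_congr rfl (fun k hk => hf k (Finset.ne_of_mem_erase hk)),
    Finset.sum_const, Finset.card_erase_of_mem (Finset.mem_univ i), Finset.card_univ,
    Fintype.card_fin, nsmul_eq_mul, Nat.cast_pred (Fin.pos i)]

theorem stmt8 (n : ℕ) (hn : 4 ≤ n) (lam : Fin n → ℝ)
    (t : ℝ) (ht : t = (∑ i, lam i) / ((n : ℝ) - 1))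
    (h : Fin n → Fin n → Fin n → ℝ)
    (hsym : ∀ i j k : Fin n, h i j k = h j i k ∧ h i j k = h i k j)
    (hsp : ∀ a b c d e : Fin n,
      (lam a + lam b - t) *
        (h c d b * kdelta a e - h c d a * kdelta b e
          - kdelta d b * h c a e + kdelta d a * h c b e
          - kdelta c b * h d a e + kdelta c a * h d b e) = 0)
    (i : Fin n) (hiii : h i i i ≠ 0) :
    lam i = 0 ∧ ∀ j k : Fin n, j ≠ i → k ≠ i → lam j = lam k := by
  have hlam : ∀ j, j ≠ i → lam j = t - lam i := fun j hj => by
    linarith [add_eq_of_semiparallel hsym hsp hj hiii]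
  have hn4 : (4 : ℝ) ≤ n := by exact_mod_cast hn
  have hsum : ∑ k, lam k = ((n : ℝ) - 1) * t := by
    rw [ht]; field_simp [show (n : ℝ) - 1 ≠ 0 by linarith]
  have hsplit := sum_eq_of_forall_ne_eq lam i _ hlam
  have hi0 : ((n : ℝ) - 2) * lam i = 0 := by linarith
  refine ⟨(mul_eq_zero.mp hi0).resolve_left (by linarith), fun j k hj hk => ?_⟩
  rw [hlam j hj, hlam k hk]
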